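/- arXiv:2506.20630 — 5 statements merged into one kernel-verified Lean document; each statement's English description precedes it below -/
import Mathlib

section
/- For y, x̃ ∈ ℝⁿ and each i ∈ {1,…,s}, define the variance-reduced gradient error δ_i := (∇f_i(y) − ∇f_i(x̃))/(q_i·s) + ∇f̄(x̃) − ∇f̄(y), where q_i := L_i/(Σ_{j=1}^s L_j). Then (a) Σ_{i=1}^s q_i·δ_i = 0, and (b) Σ_{i=1}^s q_i·‖δ_i‖² ≤ 2L̄·(f̄(x̃) − f̄(y) − ⟨∇f̄(y), x̃ − y⟩), where L̄ := (Σ_{i=1}^s L_i)/s. -/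
open RealInnerProductSpace



variable {E : Type*} [NormedAddCommGroup E] [InnerProductSpace ℝ E] [CompleteSpace E]

lemma line_hasDerivAt {f : E → ℝ} {g : E → E} (hg : ∀ x, HasGradientAt f (g x) x)
    (a v : E) (t : ℝ) :
    HasDerivAt (fun t : ℝ => f (a + t • v)) ⟪g (a + t • v), v⟫ t := by
  have h1 : HasDerivAt (fun t : ℝ => a + t • v) v t := by
    simpa using ((hasDerivAt_id t).smul_const v).const_add a
  have h2 := (hg (a + t • v)).hasFDerivAt.comp_hasDerivAt t h1
  simpa [InnerProductSpace.toDual_apply_apply, Function.comp_def] using h2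

lemma first_order {f : E → ℝ} {g : E → E} (hconv : ConvexOn ℝ Set.univ f)
    (hg : ∀ x, HasGradientAt f (g x) x) (a b : E) :
    f a + ⟪g a, b - a⟫ ≤ f b := by
  have hline : ConvexOn ℝ Set.univ (fun t : ℝ => f (a + t • (b - a))) := by
    have h := hconv.comp_affineMap (AffineMap.lineMap a b)
    have : ((AffineMap.lineMap a b : ℝ →ᵃ[ℝ] E) ⁻¹' Set.univ) = Set.univ := by simp
    rw [this] at h
    refine h.congr ?_
    intro t _
    simp [AffineMap.lineMap_apply]
    abel
  have hd := line_hasDerivAt hg a (b - a) 0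
  have hslope := hline.le_slope_of_hasDerivAt (Set.mem_univ 0) (Set.mem_univ 1)
    one_pos (by simpa using hd)
  simp [slope_def_field] at hslope
  linarith [hslope]

lemma descent_lemma {f : E → ℝ} {g : E → E} {L : ℝ} (hL : 0 ≤ L)
    (hg : ∀ x, HasGradientAt f (g x) x)
    (hLip : ∀ x y, ‖g x - g y‖ ≤ L * ‖x - y‖) (a b : E) :
    f b ≤ f a + ⟪g a, b - a⟫ + L / 2 * ‖b - a‖ ^ 2 := by
  set v := b - a with hv
  set φ : ℝ → ℝ := fun t => f (a + t • v) - t * ⟪g a, v⟫ - L / 2 * ‖v‖ ^ 2 * t ^ 2 with hφ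
  have hφd : ∀ t : ℝ, HasDerivAt φ (⟪g (a + t • v), v⟫ - ⟪g a, v⟫ - L * ‖v‖ ^ 2 * t) t := by
    intro t
    have h1 := line_hasDerivAt hg a v t
    have h2 : HasDerivAt (fun t : ℝ => t * ⟪g a, v⟫) ⟪g a, v⟫ t := by
      simpa using (hasDerivAt_id t).mul_const ⟪g a, v⟫
    have h3 : HasDerivAt (fun t : ℝ => L / 2 * ‖v‖ ^ 2 * t ^ 2) (L * ‖v‖ ^ 2 * t) t := by
      have := (hasDerivAt_pow 2 t).const_mul (L / 2 * ‖v‖ ^ 2)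
      exact this.congr_deriv (by ring)
    exact (h1.sub h2).sub h3
  have hanti : AntitoneOn φ (Set.Icc (0:ℝ) 1) := by
    apply antitoneOn_of_deriv_nonpos (convex_Icc 0 1)
    · exact fun t _ => (hφd t).continuousAt.continuousWithinAt
    · exact fun t _ => (hφd t).differentiableAt.differentiableWithinAt
    · intro t ht
      rw [interior_Icc] at ht
      rw [(hφd t).deriv]
      have hb : ⟪g (a + t • v) - g a, v⟫ ≤ ‖g (a + t • v) - g a‖ * ‖v‖ :=
        real_inner_le_norm _ _
      have hb2 : ‖g (a + t • v) - g a‖ ≤ L * (t * ‖v‖) := by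
        have := hLip (a + t • v) a
        simpa [norm_smul, abs_of_pos ht.1, mul_assoc] using this
      have hnn : (0:ℝ) ≤ ‖v‖ := norm_nonneg _
      have := inner_sub_left (𝕜 := ℝ) (g (a + t • v)) (g a) v
      nlinarith [mul_le_mul_of_nonneg_right hb2 hnn]
  have h01 := hanti (Set.mem_Icc.2 ⟨le_refl 0, zero_le_one⟩)
    (Set.mem_Icc.2 ⟨zero_le_one, le_refl 1⟩) zero_le_one
  simp only [hφ] at h01
  have he : a + (1:ℝ) • v = b := by rw [hv]; simp
  rw [he] at h01
  simp at h01
  linarith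

lemma cocoercivity {f : E → ℝ} {g : E → E} {L : ℝ} (hL : 0 < L)
    (hconv : ConvexOn ℝ Set.univ f)
    (hg : ∀ x, HasGradientAt f (g x) x)
    (hLip : ∀ x y, ‖g x - g y‖ ≤ L * ‖x - y‖) (a b : E) :
    ‖g b - g a‖ ^ 2 ≤ 2 * L * (f b - f a - ⟪g a, b - a⟫) := by
  set φ : E → ℝ := fun z => f z - ⟪g a, z⟫ with hφ
  set ψ : E → E := fun z => g z - g a with hψ
  have hφg : ∀ z, HasGradientAt φ (ψ z) z := by
    intro z
    have h1 : HasFDerivAt φ (InnerProductSpace.toDual ℝ E (ψ z)) z := by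
      have hf := (hg z).hasFDerivAt
      have hi : HasFDerivAt (fun z : E => ⟪g a, z⟫)
          (InnerProductSpace.toDual ℝ E (g a)) z :=
        (InnerProductSpace.toDual ℝ E (g a)).hasFDerivAt
      have := hf.sub hi
      simp only [hψ, map_sub]
      exact this
    simpa using h1.hasGradientAt
  have hφLip : ∀ x y : E, ‖ψ x - ψ y‖ ≤ L * ‖x - y‖ := by
    intro x y
    simpa [hψ, sub_sub_sub_cancel_right] using hLip x y
  set d := g b - g a with hd
  have hdesc := descent_lemma hL.le hφg hφLip b (b - L⁻¹ • d)
  have hmin : φ a ≤ φ (b - L⁻¹ • d) := by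
    have := first_order hconv hg a (b - L⁻¹ • d)
    simp only [hφ]
    have hi : ⟪g a, b - L⁻¹ • d - a⟫ = ⟪g a, b - L⁻¹ • d⟫ - ⟪g a, a⟫ :=
      inner_sub_right _ _ _
    linarith [this, hi.le, hi.ge]
  have hcalc : ⟪ψ b, b - L⁻¹ • d - b⟫ = -(L⁻¹ * ‖d‖ ^ 2) := by
    have : b - L⁻¹ • d - b = -(L⁻¹ • d) := by abel
    rw [this, inner_neg_right, real_inner_smul_right]
    simp [hψ, ← hd, real_inner_self_eq_norm_sq]
  have hnorm : ‖b - L⁻¹ • d - b‖ ^ 2 = L⁻¹ ^ 2 * ‖d‖ ^ 2 := by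
    have : b - L⁻¹ • d - b = -(L⁻¹ • d) := by abel
    rw [this, norm_neg, norm_smul, Real.norm_eq_abs, abs_inv, abs_of_pos hL]
    ring
  rw [hcalc, hnorm] at hdesc
  have hφa : φ a ≤ φ b - 1 / (2 * L) * ‖d‖ ^ 2 := by
    have hLne : L ≠ 0 := hL.ne'
    have : L / 2 * (L⁻¹ ^ 2 * ‖d‖ ^ 2) - L⁻¹ * ‖d‖ ^ 2 = -(1 / (2 * L) * ‖d‖ ^ 2) := by
      field_simp
      ring
    linarith [hmin, hdesc]
  have hφdiff : φ b - φ a = f b - f a - ⟪g a, b - a⟫ := by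
    simp only [hφ]
    have : ⟪g a, b - a⟫ = ⟪g a, b⟫ - ⟪g a, a⟫ := inner_sub_right _ _ _
    linarith [this.le, this.ge]
  have : 1 / (2 * L) * ‖d‖ ^ 2 ≤ φ b - φ a := by linarith
  rw [hφdiff] at this
  have h2L : (0:ℝ) < 2 * L := by linarith
  calc ‖d‖ ^ 2 = 2 * L * (1 / (2 * L) * ‖d‖ ^ 2) := by field_simp
    _ ≤ 2 * L * (f b - f a - ⟪g a, b - a⟫) := by
        exact mul_le_mul_of_nonneg_left this h2L.le


/-- Variance-reduced gradient estimator: with `q_i = L_i/ΣL_j` and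
`δ_i = (∇f_i(y) − ∇f_i(x̃))/(q_i·s) + ∇f̄(x̃) − ∇f̄(y)`, one has
(a) `Σ q_i·δ_i = 0` and (b) `Σ q_i‖δ_i‖² ≤ 2L̄(f̄(x̃) − f̄(y) − ⟨∇f̄(y), x̃−y⟩)`. -/
theorem variance_reduced_gradient_estimator {n s : ℕ} (hs : 0 < s)
    (f : Fin s → EuclideanSpace ℝ (Fin n) → ℝ)
    (f' : Fin s → EuclideanSpace ℝ (Fin n) → EuclideanSpace ℝ (Fin n))
    (L : Fin s → ℝ) (hL : ∀ i, 0 < L i)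
    (hconv : ∀ i, ConvexOn ℝ Set.univ (f i))
    (hgrad : ∀ i x, HasGradientAt (f i) (f' i x) x)
    (hLip : ∀ i x y, ‖f' i x - f' i y‖ ≤ L i * ‖x - y‖)
    (y xt : EuclideanSpace ℝ (Fin n))
    (q : Fin s → ℝ) (hq : ∀ i, q i = L i / ∑ j, L j)
    (fbar : EuclideanSpace ℝ (Fin n) → ℝ)
    (hfbar : ∀ x, fbar x = (∑ i, f i x) / s)
    (gbar : EuclideanSpace ℝ (Fin n) → EuclideanSpace ℝ (Fin n))
    (hgbar : ∀ x, HasGradientAt fbar (gbar x) x)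
    (δ : Fin s → EuclideanSpace ℝ (Fin n))
    (hδ : ∀ i, δ i = (q i * s)⁻¹ • (f' i y - f' i xt) + gbar xt - gbar y) :
    (∑ i, q i • δ i = 0) ∧
    (∑ i, q i * ‖δ i‖ ^ 2 ≤
      2 * ((∑ i, L i) / s) * (fbar xt - fbar y - ⟪gbar y, xt - y⟫)) := by
  classical
  have hspos : (0:ℝ) < (s:ℝ) := by exact_mod_cast hs
  have hne : (Finset.univ : Finset (Fin s)).Nonempty := ⟨⟨0, hs⟩, Finset.mem_univ _⟩
  have hLsum : (0:ℝ) < ∑ j, L j := Finset.sum_pos (fun i _ => hL i) hne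
  have hqpos : ∀ i, 0 < q i := fun i => by rw [hq i]; exact div_pos (hL i) hLsum
  have hsumq : ∑ i, q i = 1 := by
    simp only [hq]; rw [← Finset.sum_div, div_self hLsum.ne']
  have hgbar_eq : ∀ x, gbar x = (s:ℝ)⁻¹ • ∑ i, f' i x := by
    intro x
    have h1 : HasFDerivAt (fun x => ∑ i, f i x)
        (∑ i, InnerProductSpace.toDual ℝ _ (f' i x)) x :=
      HasFDerivAt.fun_sum (fun i _ => (hgrad i x).hasFDerivAt)
    have h2 := h1.const_smul ((s:ℝ)⁻¹)
    have heq : fbar = fun x => (s:ℝ)⁻¹ • ∑ i, f i x := by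
      funext z; rw [hfbar z, smul_eq_mul, div_eq_inv_mul]
    have h3 : HasGradientAt fbar ((s:ℝ)⁻¹ • ∑ i, f' i x) x := by
      rw [heq, hasGradientAt_iff_hasFDerivAt, map_smul, map_sum]
      exact h2
    exact (hgbar x).unique h3
  set u : Fin s → EuclideanSpace ℝ (Fin n) := fun i => f' i y - f' i xt with hu
  set c : EuclideanSpace ℝ (Fin n) := gbar xt - gbar y with hc
  have hkey : (s:ℝ)⁻¹ • ∑ i, u i = -c := by
    rw [hu, hc, Finset.sum_sub_distrib, smul_sub, ← hgbar_eq, ← hgbar_eq]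
    abel
  have hqs : ∀ i, q i * (q i * (s:ℝ))⁻¹ = (s:ℝ)⁻¹ := by
    intro i
    rw [mul_inv, ← mul_assoc, mul_inv_cancel₀ (hqpos i).ne']
    ring
  set w : Fin s → EuclideanSpace ℝ (Fin n) := fun i => (q i * (s:ℝ))⁻¹ • u i with hw
  have hδ' : ∀ i, δ i = w i + c := by
    intro i; rw [hδ i, hw, hu, hc, add_sub_assoc]
  have hqw : ∀ i, q i • w i = (s:ℝ)⁻¹ • u i := by
    intro i; rw [hw, smul_smul, hqs i]
  have hsumqw : ∑ i, q i • w i = -c := by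
    simp only [hqw]; rw [← Finset.smul_sum]; exact hkey
  constructor
  · have : ∀ i, q i • δ i = q i • w i + q i • c := by
      intro i; rw [hδ' i, smul_add]
    rw [Finset.sum_congr rfl (fun i _ => this i), Finset.sum_add_distrib, hsumqw,
      ← Finset.sum_smul, hsumq, one_smul]
    abel
  · set D : Fin s → ℝ := fun i => f i xt - f i y - ⟪f' i y, xt - y⟫ with hD
    have hsum_expand : ∑ i, q i * ‖δ i‖ ^ 2
        = ∑ i, q i * ‖w i‖ ^ 2 + 2 * ⟪∑ i, q i • w i, c⟫ + ‖c‖ ^ 2 := by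
      have hterm : ∀ i, q i * ‖δ i‖ ^ 2
          = q i * ‖w i‖ ^ 2 + 2 * (q i * ⟪w i, c⟫) + q i * ‖c‖ ^ 2 := by
        intro i
        rw [hδ' i, norm_add_sq_real]
        ring
      rw [Finset.sum_congr rfl (fun i _ => hterm i), Finset.sum_add_distrib,
        Finset.sum_add_distrib, ← Finset.sum_mul, hsumq, one_mul, ← Finset.mul_sum]
      congr 2
      rw [sum_inner]
      congr 1
      exact Finset.sum_congr rfl (fun i _ => (real_inner_smul_left (w i) c (q i)).symm)
    have hinner_c : ⟪∑ i, q i • w i, c⟫ = -‖c‖ ^ 2 := by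
      rw [hsumqw, inner_neg_left, real_inner_self_eq_norm_sq]
    have hle1 : ∑ i, q i * ‖δ i‖ ^ 2 ≤ ∑ i, q i * ‖w i‖ ^ 2 := by
      rw [hsum_expand, hinner_c]
      nlinarith [sq_nonneg ‖c‖]
    have hterm2 : ∀ i, q i * ‖w i‖ ^ 2 ≤ 2 * (∑ j, L j) / (s:ℝ) ^ 2 * D i := by
      intro i
      have hcoco := cocoercivity (hL i) (hconv i) (hgrad i) (fun a b => hLip i a b) y xt
      have hcn : ‖f' i xt - f' i y‖ = ‖u i‖ := by rw [hu, norm_sub_rev]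
      rw [hcn] at hcoco
      have hwn : ‖w i‖ ^ 2 = ((q i * (s:ℝ))⁻¹) ^ 2 * ‖u i‖ ^ 2 := by
        rw [hw, norm_smul, Real.norm_eq_abs, abs_inv,
          abs_of_pos (mul_pos (hqpos i) hspos)]
        ring
      rw [hwn]
      have hq2 : q i * ((q i * (s:ℝ))⁻¹) ^ 2 * (2 * L i) = 2 * (∑ j, L j) / (s:ℝ) ^ 2 := by
        have hLi : L i ≠ 0 := (hL i).ne'
        have hsne : (s:ℝ) ≠ 0 := hspos.ne'
        have hAne : (∑ j, L j) ≠ 0 := hLsum.ne'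
        rw [hq i]
        field_simp
      calc q i * (((q i * (s:ℝ))⁻¹) ^ 2 * ‖u i‖ ^ 2)
          ≤ q i * (((q i * (s:ℝ))⁻¹) ^ 2 * (2 * L i * D i)) := by
            apply mul_le_mul_of_nonneg_left _ (hqpos i).le
            exact mul_le_mul_of_nonneg_left hcoco (by positivity)
        _ = 2 * (∑ j, L j) / (s:ℝ) ^ 2 * D i := by rw [← hq2]; ring
    have hle2 : ∑ i, q i * ‖w i‖ ^ 2 ≤ 2 * (∑ j, L j) / (s:ℝ) ^ 2 * ∑ i, D i := by
      rw [Finset.mul_sum]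
      exact Finset.sum_le_sum (fun i _ => hterm2 i)
    have hDsum : 2 * (∑ j, L j) / (s:ℝ) ^ 2 * ∑ i, D i
        = 2 * ((∑ i, L i) / s) * (fbar xt - fbar y - ⟪gbar y, xt - y⟫) := by
      have hg : ⟪gbar y, xt - y⟫ = (s:ℝ)⁻¹ * ∑ i, ⟪f' i y, xt - y⟫ := by
        rw [hgbar_eq y, real_inner_smul_left, sum_inner]
      have hDs : ∑ i, D i = ∑ i, f i xt - ∑ i, f i y - ∑ i, ⟪f' i y, xt - y⟫ := by
        simp only [hD, Finset.sum_sub_distrib]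
      rw [hDs, hg, hfbar xt, hfbar y]
      have hsne : (s:ℝ) ≠ 0 := hspos.ne'
      set a := ∑ i, f i xt with ha
      set b := ∑ i, f i y with hb
      set p := ∑ i, (inner ℝ (f' i y) (xt - y) : ℝ) with hp
      field_simp
      try ring
      try exact Or.inl trivial
    calc ∑ i, q i * ‖δ i‖ ^ 2 ≤ ∑ i, q i * ‖w i‖ ^ 2 := hle1
      _ ≤ 2 * (∑ j, L j) / (s:ℝ) ^ 2 * ∑ i, D i := hle2
      _ = _ := hDsum
end

section
/- Let γ > 0, g, y ∈ ℝⁿ, z₀ ∈ X, and let z ∈ X satisfy γ(⟨g, z⟩ + ψ(z)) + ½‖z − z₀‖² ≤ γ(⟨g, u⟩ + ψ(u)) + ½‖u − z₀‖² for every u ∈ X. Set δ := g − ∇φ(y) and ℓ(u, v) := φ(v) + ⟨∇φ(v), u − v⟩. Then for every x ∈ X: γ·(ℓ(z, y) − ℓ(x, y) + ψ(z) − ψ(x)) ≤ ½‖z₀ − x‖² − ½‖z − x‖² − ½‖z₀ − z‖² − γ⟨δ, z − x⟩. -/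
/-!
The prox point `z` minimizes `f u + ½‖u - z₀‖²` over `X`, where `f u = γ (⟪g, u⟫ + ψ u)` is
convex. Comparing `z` with the points `z + t (x - z)` of the segment towards `x` and letting
`t → 0⁺` gives the first-order condition `f z ≤ f x + ⟪z - z₀, x - z⟫`; the three-point identity
for `⟪z - z₀, x - z⟫` turns it into the strongly convex bound
`f z + ½‖z - z₀‖² + ½‖x - z‖² ≤ f x + ½‖x - z₀‖²`. Writing `g = ∇φ(y) + δ` and expanding the
linearization `ℓ` then yields the claim.
-/

open RealInnerProductSpace Set Filter Topology

theorem le_of_forall_mem_Ioo_le_add_mul {a b c : ℝ} (h : ∀ t ∈ Ioo (0 : ℝ) 1, a ≤ b + t * c) :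
    a ≤ b := by
  have hlim : Tendsto (fun t : ℝ => b + t * c) (𝓝[>] 0) (𝓝 b) := by
    have : Tendsto (fun t : ℝ => b + t * c) (𝓝 0) (𝓝 (b + 0 * c)) :=
      (continuous_const.add (continuous_id.mul continuous_const)).tendsto 0
    simpa using this.mono_left nhdsWithin_le_nhds
  exact ge_of_tendsto hlim (eventually_of_mem (Ioo_mem_nhdsGT one_pos) h)

section ProxInequality

variable {E : Type*} [NormedAddCommGroup E] [InnerProductSpace ℝ E]
  {s : Set E} {f : E → ℝ} {x z z₀ : E}

theorem ConvexOn.le_add_inner_of_isMinOn_add_half_sq (hf : ConvexOn ℝ s f)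
    (hmin : IsMinOn (fun u => f u + ‖u - z₀‖ ^ 2 / 2) s z) (hz : z ∈ s) (hx : x ∈ s) :
    f z ≤ f x + ⟪z - z₀, x - z⟫ := by
  refine le_of_forall_mem_Ioo_le_add_mul (c := ‖x - z‖ ^ 2 / 2) fun t ⟨ht0, ht1⟩ => ?_
  have hcomb : (1 - t) + t = 1 := by ring
  have hu : (1 - t) • z + t • x ∈ s := hf.1 hz hx (by linarith) ht0.le hcomb
  have hfu : f ((1 - t) • z + t • x) ≤ (1 - t) • f z + t • f x :=
    hf.2 hz hx (by linarith) ht0.le hcomb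
  have hnorm : ‖(1 - t) • z + t • x - z₀‖ ^ 2 =
      ‖z - z₀‖ ^ 2 + 2 * t * ⟪z - z₀, x - z⟫ + t ^ 2 * ‖x - z‖ ^ 2 := by
    rw [show (1 - t) • z + t • x - z₀ = (z - z₀) + t • (x - z) by module, norm_add_sq_real,
      inner_smul_right, norm_smul, mul_pow, Real.norm_eq_abs, sq_abs]
    ring
  have hmin_u := isMinOn_iff.mp hmin _ hu
  simp only [smul_eq_mul, hnorm] at hmin_u hfu
  have : t * f z ≤ t * (f x + ⟪z - z₀, x - z⟫ + t * (‖x - z‖ ^ 2 / 2)) := by nlinarith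
  exact le_of_mul_le_mul_left this ht0

theorem ConvexOn.add_half_sq_le_of_isMinOn_add_half_sq (hf : ConvexOn ℝ s f)
    (hmin : IsMinOn (fun u => f u + ‖u - z₀‖ ^ 2 / 2) s z) (hz : z ∈ s) (hx : x ∈ s) :
    f z + ‖z - z₀‖ ^ 2 / 2 + ‖x - z‖ ^ 2 / 2 ≤ f x + ‖x - z₀‖ ^ 2 / 2 := by
  have hfirst := hf.le_add_inner_of_isMinOn_add_half_sq hmin hz hx
  have hthree : ‖x - z₀‖ ^ 2 = ‖x - z‖ ^ 2 + 2 * ⟪z - z₀, x - z⟫ + ‖z - z₀‖ ^ 2 := by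
    rw [show x - z₀ = (x - z) + (z - z₀) by abel, norm_add_sq_real, real_inner_comm]
  linarith

end ProxInequality

theorem inexact_prox_step_general {n : ℕ}
    (X : Set (EuclideanSpace ℝ (Fin n)))
    (hXconv : Convex ℝ X)
    (ψ : EuclideanSpace ℝ (Fin n) → ℝ) (hψ : ConvexOn ℝ Set.univ ψ)
    (φ : EuclideanSpace ℝ (Fin n) → ℝ)
    (φ' : EuclideanSpace ℝ (Fin n) → EuclideanSpace ℝ (Fin n))
    (γ : ℝ) (hγ : 0 < γ)
    (g y z₀ : EuclideanSpace ℝ (Fin n))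
    (z : EuclideanSpace ℝ (Fin n)) (hzX : z ∈ X)
    (hprox : ∀ u ∈ X,
      γ * (⟪g, z⟫ + ψ z) + ‖z - z₀‖ ^ 2 / 2 ≤
        γ * (⟪g, u⟫ + ψ u) + ‖u - z₀‖ ^ 2 / 2) :
    ∀ x ∈ X,
      γ * ((φ y + ⟪φ' y, z - y⟫) - (φ y + ⟪φ' y, x - y⟫) + ψ z - ψ x) ≤
        ‖z₀ - x‖ ^ 2 / 2 - ‖z - x‖ ^ 2 / 2 - ‖z₀ - z‖ ^ 2 / 2 -
        γ * ⟪g - φ' y, z - x⟫ := by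
  intro x hx
  have hconvex : ConvexOn ℝ X fun u => γ * (⟪g, u⟫ + ψ u) :=
    (((innerₛₗ ℝ g).convexOn hXconv).add (hψ.subset (subset_univ X) hXconv)).smul hγ.le
  have hbound := hconvex.add_half_sq_le_of_isMinOn_add_half_sq (isMinOn_iff.mpr hprox) hzX hx
  rw [norm_sub_rev z₀ x, norm_sub_rev z x, norm_sub_rev z₀ z]
  simp only [inner_sub_left, inner_sub_right] at hbound ⊢
  linarith

/-- Inexact proximal gradient step inequality: if `z` is the prox point of the linearized
objective at `y` with inexact gradient `g`, `δ = g − ∇φ(y)` and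
`ℓ(u,v) = φ(v) + ⟨∇φ(v), u−v⟩`, then for every `x ∈ X`,
`γ(ℓ(z,y) − ℓ(x,y) + ψ(z) − ψ(x)) ≤ ½‖z₀−x‖² − ½‖z−x‖² − ½‖z₀−z‖² − γ⟨δ, z−x⟩`. -/
theorem inexact_prox_step {n : ℕ}
    (X : Set (EuclideanSpace ℝ (Fin n))) (hXne : X.Nonempty)
    (hXclosed : IsClosed X) (hXconv : Convex ℝ X)
    (ψ : EuclideanSpace ℝ (Fin n) → ℝ) (hψ : ConvexOn ℝ Set.univ ψ)
    (φ : EuclideanSpace ℝ (Fin n) → ℝ)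
    (φ' : EuclideanSpace ℝ (Fin n) → EuclideanSpace ℝ (Fin n))
    (hφgrad : ∀ x, HasGradientAt φ (φ' x) x)
    (γ : ℝ) (hγ : 0 < γ)
    (g y z₀ : EuclideanSpace ℝ (Fin n)) (hz₀ : z₀ ∈ X)
    (z : EuclideanSpace ℝ (Fin n)) (hzX : z ∈ X)
    (hprox : ∀ u ∈ X,
      γ * (⟪g, z⟫ + ψ z) + ‖z - z₀‖ ^ 2 / 2 ≤
        γ * (⟪g, u⟫ + ψ u) + ‖u - z₀‖ ^ 2 / 2) :
    ∀ x ∈ X,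
      γ * ((φ y + ⟪φ' y, z - y⟫) - (φ y + ⟪φ' y, x - y⟫) + ψ z - ψ x) ≤
        ‖z₀ - x‖ ^ 2 / 2 - ‖z - x‖ ^ 2 / 2 - ‖z₀ - z‖ ^ 2 / 2 -
        γ * ⟪g - φ' y, z - x⟫ :=
  inexact_prox_step_general X hXconv ψ hψ φ φ' γ hγ g y z₀ z hzX hprox
end

section
/- Let s ≥ 1 be an integer and L_f, L_c > 0. Set k₀ := ⌊log₂ s⌋ + 1, and for integers k ≥ 1 define: α_k := 6/7 if k ≤ k₀ and α_k := 6/(k − k₀ + 7) if k > k₀; p_k := 1/7; T_k := 2^{k−1} if k ≤ k₀ and T_k := 2^{k₀−1} if k > k₀; ρ_k := 2^{k/2} if k ≤ k₀ and ρ_k := 3√s·(k − k₀ + 7)/16 if k > k₀; γ_k := 1/(8(L_f + ρ_k·L_c)·α_k); 𝓛_k := γ_k/α_k + (T_k − 1)·γ_k(α_k + p_k)/α_k; and 𝓡_k := (γ_k/α_k)(1 − α_k) + (T_k − 1)·γ_k·p_k/α_k. Then for every k ≥ 1: 𝓛_k·(1 − 2(ρ_{k+1} − ρ_k)/ρ_{k+1})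 ≥ 𝓡_{k+1}. -/
/-!
With `D_k = L_f + ρ_k L_c` and `γ_k = 1 / (8 D_k α_k)`, both `𝓛_k` and `𝓡_k` are a coefficient
depending only on `(α_k, p_k, T_k)` divided by `8 D_k`. Since `ρ_k` is nondecreasing
(`2^{k₀}` lies between `s` and `2s`), `D_k ≤ D_{k+1}`, so it suffices to compare the coefficients.
The factor `1 - 2 (ρ_{k+1} - ρ_k) / ρ_{k+1}` equals `√2 - 1` while `ρ_k = 2^{k/2}`, is at least
`1/3` at the switch `k = k₀`, and equals `(y - 1) / (y + 1)` with `y = k - k₀ + 7` afterwards;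
in each regime the comparison is an elementary polynomial inequality.
-/

noncomputable section

namespace Stepsize

def alpha (k₀ k : ℕ) : ℝ := if k ≤ k₀ then (6 : ℝ) / 7 else 6 / ((k : ℝ) - k₀ + 7)

def epochLength (k₀ k : ℕ) : ℕ := if k ≤ k₀ then 2 ^ (k - 1) else 2 ^ (k₀ - 1)

def rho (s k₀ k : ℕ) : ℝ :=
  if k ≤ k₀ then (2 : ℝ) ^ ((k : ℝ) / 2) else 3 * Real.sqrt s * ((k : ℝ) - k₀ + 7) / 16

/-- `𝓛 = leftCoeff α p T / (8 D)` and `𝓡 = rightCoeff α p T / (8 D)` when `γ = 1 / (8 D α)`. -/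
def leftCoeff (α p T : ℝ) : ℝ := (1 + (T - 1) * (α + p)) / α ^ 2

def rightCoeff (α p T : ℝ) : ℝ := (1 - α + (T - 1) * p) / α ^ 2

lemma leftSum_eq {γ α p T D : ℝ} (hα : α ≠ 0) (hγ : γ = 1 / (8 * D * α)) :
    γ / α + (T - 1) * γ * (α + p) / α = leftCoeff α p T / (8 * D) := by
  rw [hγ, leftCoeff]
  field_simp

lemma rightSum_eq {γ α p T D : ℝ} (hα : α ≠ 0) (hγ : γ = 1 / (8 * D * α)) :
    γ / α * (1 - α) + (T - 1) * γ * p / α = rightCoeff α p T / (8 * D) := by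
  rw [hγ, rightCoeff]
  field_simp

lemma leftCoeff_nonneg {α p T : ℝ} (hα : 0 ≤ α) (hp : 0 ≤ p) (hT : 1 ≤ T) :
    0 ≤ leftCoeff α p T := by
  unfold leftCoeff
  have : 0 ≤ (T - 1) * (α + p) := mul_nonneg (by linarith) (by linarith)
  positivity

lemma rightCoeff_nonneg {α p T : ℝ} (hα : α ≤ 1) (hp : 0 ≤ p) (hT : 1 ≤ T) :
    0 ≤ rightCoeff α p T := by
  unfold rightCoeff
  have : 0 ≤ (T - 1) * p := mul_nonneg (by linarith) hp
  positivity

lemma rightSum_le_leftSum_mul {Lf Lc ρ ρ' α α' p T T' γ γ' F : ℝ} (hLf : 0 < Lf) (hLc : 0 ≤ Lc)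
    (hρ : 0 ≤ ρ) (hρρ' : ρ ≤ ρ') (hα : α ≠ 0) (hα' : α' ≠ 0)
    (hγ : γ = 1 / (8 * (Lf + ρ * Lc) * α)) (hγ' : γ' = 1 / (8 * (Lf + ρ' * Lc) * α'))
    (hR : 0 ≤ rightCoeff α' p T') (h : rightCoeff α' p T' ≤ leftCoeff α p T * F) :
    γ' / α' * (1 - α') + (T' - 1) * γ' * p / α' ≤ (γ / α + (T - 1) * γ * (α + p) / α) * F := by
  have hD : 0 < Lf + ρ * Lc := by positivity
  have hDD' : Lf + ρ * Lc ≤ Lf + ρ' * Lc := by gcongr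
  rw [leftSum_eq hα hγ, rightSum_eq hα' hγ']
  calc rightCoeff α' p T' / (8 * (Lf + ρ' * Lc))
      ≤ rightCoeff α' p T' / (8 * (Lf + ρ * Lc)) := by gcongr
    _ ≤ leftCoeff α p T * F / (8 * (Lf + ρ * Lc)) := by gcongr
    _ = _ := by ring

lemma rightCoeff_le_of_doubling {t : ℝ} (ht : 0 ≤ t) :
    rightCoeff (6 / 7) (1 / 7) (2 * t) ≤ leftCoeff (6 / 7) (1 / 7) t * (√2 - 1) := by
  have h2 : (9 / 7 : ℝ) ≤ √2 := Real.le_sqrt_of_sq_le (by norm_num)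
  unfold leftCoeff rightCoeff
  ring_nf
  nlinarith

lemma rightCoeff_le_of_switch {t : ℝ} (ht : 1 ≤ t) :
    rightCoeff (3 / 4) (1 / 7) t ≤ leftCoeff (6 / 7) (1 / 7) t * (1 / 3) := by
  unfold leftCoeff rightCoeff
  ring_nf
  linarith

lemma rightCoeff_le_of_decay {y t : ℝ} (hy : 2 ≤ y) (ht : 1 ≤ t) :
    rightCoeff (6 / (y + 1)) (1 / 7) t ≤ leftCoeff (6 / y) (1 / 7) t * ((y - 1) / (y + 1)) := by
  unfold leftCoeff rightCoeff
  rw [div_le_iff₀ (by positivity)]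
  field_simp
  -- the `t`-linear part reduces to `(y + 1) ^ 3 ≤ y (y + 42) (y - 1)`
  nlinarith [mul_nonneg (sub_nonneg.2 ht) (by nlinarith : (0:ℝ) ≤ 38 * y ^ 2 - 45 * y - 1)]

section Schedule

variable {s k₀ k : ℕ}

lemma alpha_of_le (h : k ≤ k₀) : alpha k₀ k = 6 / 7 := if_pos h

lemma alpha_of_lt (h : k₀ < k) : alpha k₀ k = 6 / ((k : ℝ) - k₀ + 7) := if_neg h.not_ge

lemma alpha_pos : 0 < alpha k₀ k := by
  rcases le_or_gt k k₀ with h | h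
  · rw [alpha_of_le h]; norm_num
  · have : (k₀ : ℝ) < k := by exact_mod_cast h
    rw [alpha_of_lt h]; exact div_pos (by norm_num) (by linarith)

lemma alpha_le_one : alpha k₀ k ≤ 1 := by
  rcases le_or_gt k k₀ with h | h
  · rw [alpha_of_le h]; norm_num
  · have : (k₀ : ℝ) + 1 ≤ k := by exact_mod_cast h
    rw [alpha_of_lt h, div_le_one (by linarith)]; linarith

lemma one_le_epochLength : 1 ≤ epochLength k₀ k := by
  unfold epochLength; split_ifs <;> exact Nat.one_le_two_pow

lemma epochLength_succ_of_lt (hk : 1 ≤ k) (h : k < k₀) :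
    epochLength k₀ (k + 1) = 2 * epochLength k₀ k := by
  rw [epochLength, epochLength, if_pos (show k + 1 ≤ k₀ from h), if_pos h.le, ← pow_succ']
  congr 1; omega

lemma epochLength_succ_of_le (h : k₀ ≤ k) : epochLength k₀ (k + 1) = epochLength k₀ k := by
  rw [epochLength, epochLength, if_neg (by omega)]
  split_ifs with hk
  · rw [le_antisymm hk h]
  · rfl

lemma two_rpow_half (n : ℕ) : (2 : ℝ) ^ ((n : ℝ) / 2) = √(2 ^ n) := by
  rw [Real.sqrt_eq_rpow, ← Real.rpow_natCast, ← Real.rpow_mul zero_le_two]; ring_nf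

lemma rho_of_le (h : k ≤ k₀) : rho s k₀ k = √(2 ^ k) := by
  rw [rho, if_pos h, two_rpow_half]

lemma rho_of_lt (h : k₀ < k) : rho s k₀ k = 3 * √s / 16 * ((k : ℝ) - k₀ + 7) := by
  rw [rho, if_neg h.not_ge]; ring

lemma rho_succ_of_lt (h : k < k₀) : rho s k₀ (k + 1) = √2 * rho s k₀ k := by
  rw [rho_of_le h, rho_of_le h.le, pow_succ', Real.sqrt_mul zero_le_two]

lemma rho_succ_self : rho s k₀ (k₀ + 1) = 3 / 2 * √s := by
  rw [rho_of_lt (Nat.lt_succ_self k₀)]; push_cast; ring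

lemma rho_succ_of_gt (h : k₀ < k) :
    rho s k₀ (k + 1) = 3 * √s / 16 * (((k : ℝ) - k₀ + 7) + 1) := by
  rw [rho_of_lt (h.trans (Nat.lt_succ_self k))]; push_cast; ring

lemma alpha_succ_self : alpha k₀ (k₀ + 1) = 3 / 4 := by
  rw [alpha_of_lt (Nat.lt_succ_self k₀)]; push_cast; norm_num

lemma alpha_succ_of_gt (h : k₀ < k) : alpha k₀ (k + 1) = 6 / (((k : ℝ) - k₀ + 7) + 1) := by
  rw [alpha_of_lt (h.trans (Nat.lt_succ_self k))]; push_cast; ring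

lemma rho_pos (hs : 0 < s) : 0 < rho s k₀ k := by
  rcases le_or_gt k k₀ with h | h
  · rw [rho_of_le h]; positivity
  · have : (k₀ : ℝ) < k := by exact_mod_cast h
    have : (0 : ℝ) < s := by exact_mod_cast hs
    rw [rho_of_lt h]
    exact mul_pos (by positivity) (by linarith)

lemma sqrt_le_rho_self (hlo : s ≤ 2 ^ k₀) : √s ≤ rho s k₀ k₀ := by
  rw [rho_of_le le_rfl]; exact Real.sqrt_le_sqrt (by exact_mod_cast hlo)

lemma rho_self_le (hhi : 2 ^ k₀ ≤ 2 * s) : rho s k₀ k₀ ≤ 3 / 2 * √s := by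
  have hhi' : (2 : ℝ) ^ k₀ ≤ 2 * s := by exact_mod_cast hhi
  rw [rho_of_le le_rfl, Real.sqrt_le_left (by positivity), mul_pow, Real.sq_sqrt (by positivity)]
  linarith

lemma rho_le_succ (hhi : 2 ^ k₀ ≤ 2 * s) : rho s k₀ k ≤ rho s k₀ (k + 1) := by
  rcases lt_trichotomy k k₀ with h | rfl | h
  · rw [rho_succ_of_lt h, rho_of_le h.le]
    exact le_mul_of_one_le_left (Real.sqrt_nonneg _) (Real.one_le_sqrt.2 one_le_two)
  · rw [rho_succ_self]; exact rho_self_le hhi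
  · rw [rho_succ_of_gt h, rho_of_lt h]
    exact mul_le_mul_of_nonneg_left (by linarith) (by positivity)

lemma rightCoeff_succ_le (hs : 0 < s) (hlo : s ≤ 2 ^ k₀) (hk : 1 ≤ k) :
    rightCoeff (alpha k₀ (k + 1)) (1 / 7) (epochLength k₀ (k + 1)) ≤
      leftCoeff (alpha k₀ k) (1 / 7) (epochLength k₀ k) *
        (1 - 2 * (rho s k₀ (k + 1) - rho s k₀ k) / rho s k₀ (k + 1)) := by
  have hT : (1 : ℝ) ≤ epochLength k₀ k := by exact_mod_cast one_le_epochLength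
  have hs' : 0 < √s := Real.sqrt_pos.2 (by exact_mod_cast hs)
  rcases lt_trichotomy k k₀ with h | rfl | h
  · have hρ : rho s k₀ k ≠ 0 := (rho_pos hs).ne'
    have hF : 1 - 2 * (√2 * rho s k₀ k - rho s k₀ k) / (√2 * rho s k₀ k) = √2 - 1 := by
      field_simp
      linear_combination -Real.mul_self_sqrt zero_le_two
    rw [alpha_of_le h.le, alpha_of_le (show k + 1 ≤ k₀ from h), epochLength_succ_of_lt hk h,
      rho_succ_of_lt h, hF]
    push_cast
    exact rightCoeff_le_of_doubling (by linarith)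
  · have hF : 1 / 3 ≤ 1 - 2 * (3 / 2 * √s - rho s k k) / (3 / 2 * √s) := by
      have : 2 * (3 / 2 * √s - rho s k k) / (3 / 2 * √s) ≤ 2 / 3 := by
        rw [div_le_iff₀ (by positivity)]
        linarith [sqrt_le_rho_self hlo]
      linarith
    rw [alpha_of_le le_rfl, alpha_succ_self, epochLength_succ_of_le le_rfl, rho_succ_self]
    calc _ ≤ leftCoeff (6 / 7) (1 / 7) (epochLength k k) * (1 / 3) := rightCoeff_le_of_switch hT
      _ ≤ _ := mul_le_mul_of_nonneg_left hF (leftCoeff_nonneg (by norm_num) (by norm_num) hT)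
  · have hy : (2 : ℝ) ≤ (k : ℝ) - k₀ + 7 := by
      have : (k₀ : ℝ) < k := by exact_mod_cast h
      linarith
    have hc : 0 < 3 * √s / 16 := by positivity
    rw [alpha_of_lt h, alpha_succ_of_gt h, epochLength_succ_of_le h.le, rho_of_lt h,
      rho_succ_of_gt h]
    generalize (k : ℝ) - k₀ + 7 = y at hy ⊢
    generalize 3 * √s / 16 = c at hc ⊢
    have hy1 : y + 1 ≠ 0 := by linarith
    have hF : 1 - 2 * (c * (y + 1) - c * y) / (c * (y + 1)) = (y - 1) / (y + 1) := by
      field_simp; ring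
    rw [hF]
    exact rightCoeff_le_of_decay hy hT

end Schedule

lemma lt_two_pow_natFloor_logb_succ (s : ℕ) : s < 2 ^ (⌊Real.logb 2 s⌋₊ + 1) := by
  have := Real.natFloor_logb_natCast 2 s
  push_cast at this
  rw [this]; exact Nat.lt_pow_succ_log_self one_lt_two s

lemma two_pow_natFloor_logb_succ_le {s : ℕ} (hs : s ≠ 0) :
    2 ^ (⌊Real.logb 2 s⌋₊ + 1) ≤ 2 * s := by
  have := Real.natFloor_logb_natCast 2 s
  push_cast at this
  rw [this, pow_succ']; exact Nat.mul_le_mul_left 2 (Nat.pow_log_le_self 2 hs)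

end Stepsize

end

open Stepsize in
/-- Lemma on the stepsize bookkeeping (case (ii) parameters of Theorem 3.2): with
`k₀ = ⌊log₂ s⌋ + 1` and the explicitly given `α_k, p_k, T_k, ρ_k, γ_k`, the quantities
`𝓛_k = γ_k/α_k + (T_k−1)γ_k(α_k+p_k)/α_k` and
`𝓡_k = (γ_k/α_k)(1−α_k) + (T_k−1)γ_kp_k/α_k` satisfy
`𝓛_k·(1 − 2(ρ_{k+1}−ρ_k)/ρ_{k+1}) ≥ 𝓡_{k+1}` for every `k ≥ 1`. -/
theorem stepsize_bookkeeping (s : ℕ) (hs : 1 ≤ s)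
    (Lf Lc : ℝ) (hLf : 0 < Lf) (hLc : 0 < Lc)
    (k₀ : ℕ) (hk₀ : k₀ = ⌊Real.logb 2 s⌋₊ + 1)
    (α : ℕ → ℝ)
    (hα : ∀ k, 1 ≤ k → α k = if k ≤ k₀ then (6 : ℝ) / 7 else 6 / ((k : ℝ) - k₀ + 7))
    (p : ℕ → ℝ) (hp : ∀ k, 1 ≤ k → p k = (1 : ℝ) / 7)
    (T : ℕ → ℕ)
    (hT : ∀ k, 1 ≤ k → T k = if k ≤ k₀ then 2 ^ (k - 1) else 2 ^ (k₀ - 1))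
    (ρ : ℕ → ℝ)
    (hρ : ∀ k, 1 ≤ k → ρ k = if k ≤ k₀ then (2 : ℝ) ^ ((k : ℝ) / 2)
      else 3 * Real.sqrt s * ((k : ℝ) - k₀ + 7) / 16)
    (γ : ℕ → ℝ) (hγ : ∀ k, 1 ≤ k → γ k = 1 / (8 * (Lf + ρ k * Lc) * α k))
    (𝓛 : ℕ → ℝ)
    (h𝓛 : ∀ k, 1 ≤ k → 𝓛 k = γ k / α k + ((T k : ℝ) - 1) * γ k * (α k + p k) / α k)
    (𝓡 : ℕ → ℝ)
    (h𝓡 : ∀ k, 1 ≤ k →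
      𝓡 k = γ k / α k * (1 - α k) + ((T k : ℝ) - 1) * γ k * p k / α k) :
    ∀ k, 1 ≤ k → 𝓛 k * (1 - 2 * (ρ (k + 1) - ρ k) / ρ (k + 1)) ≥ 𝓡 (k + 1) := by
  intro k hk
  have hk' : 1 ≤ k + 1 := by omega
  have hlo : s ≤ 2 ^ k₀ := hk₀ ▸ (lt_two_pow_natFloor_logb_succ s).le
  have hhi : 2 ^ k₀ ≤ 2 * s := hk₀ ▸ two_pow_natFloor_logb_succ_le (by omega)
  obtain ⟨eα, eT, eρ⟩ : (∀ j, 1 ≤ j → α j = alpha k₀ j) ∧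
      (∀ j, 1 ≤ j → T j = epochLength k₀ j) ∧ (∀ j, 1 ≤ j → ρ j = rho s k₀ j) := ⟨hα, hT, hρ⟩
  rw [ge_iff_le, h𝓛 k hk, h𝓡 (k + 1) hk', hγ k hk, hγ (k + 1) hk', hp k hk, hp (k + 1) hk',
    eα k hk, eα _ hk', eT k hk, eT _ hk', eρ k hk, eρ _ hk']
  exact rightSum_le_leftSum_mul hLf hLc.le (rho_pos hs).le (rho_le_succ hhi) alpha_pos.ne'
    alpha_pos.ne' rfl rfl
    (rightCoeff_nonneg alpha_le_one (by norm_num) (by exact_mod_cast one_le_epochLength))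
    (rightCoeff_succ_le hs hlo hk)
end

section
/- Let s ≥ 1 be an integer, a ∈ ℝ, V > 0, and let Y₁,…,Y_s : Ω → ℝ be independent identically distributed random variables with a ≤ Y_i ≤ a + V almost surely. Then ∫ |(1/s)Σ_{i=1}^s Y_i(ω) − 𝔼[Y₁]| dμ(ω) ≤ V·√(π/(2s)). -/
open MeasureTheory ProbabilityTheory

/-- L¹ deviation bound for bounded i.i.d. averages (consequence of Hoeffding's
inequality): if `Y₁, …, Y_s` are i.i.d. with `a ≤ Y_i ≤ a + V` a.s., then
`𝔼|S̄ − 𝔼[Y₁]| ≤ V·√(π/(2s))`, where `S̄ = (1/s)Σ Y_i`. -/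
theorem iid_average_L1_deviation {Ω : Type*} [MeasurableSpace Ω]
    (μ : Measure Ω) [IsProbabilityMeasure μ]
    (s : ℕ) (hs : 0 < s) (a V : ℝ) (hV : 0 < V)
    (Y : Fin s → Ω → ℝ)
    (hmeas : ∀ i, Measurable (Y i))
    (hindep : iIndepFun Y μ)
    (hident : ∀ i, IdentDistrib (Y i) (Y ⟨0, hs⟩) μ μ)
    (hbdd : ∀ i, ∀ᵐ ω ∂μ, Y i ω ∈ Set.Icc a (a + V)) :
    ∫ ω, |(1 / (s : ℝ)) * ∑ i, Y i ω - ∫ ω', Y ⟨0, hs⟩ ω' ∂μ| ∂μ ≤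
      V * Real.sqrt (Real.pi / (2 * s)) := by
  set m : ℝ := ∫ ω', Y ⟨0, hs⟩ ω' ∂μ with hm
  have hsR : (0 : ℝ) < s := by exact_mod_cast hs
  -- each Y i is in L²
  have hY2 : ∀ i, MemLp (Y i) 2 μ := by
    intro i
    refine MemLp.of_bound (hmeas i).aestronglyMeasurable (|a| + V) ?_
    filter_upwards [hbdd i] with ω hω
    rcases hω with ⟨h1, h2⟩
    rw [Real.norm_eq_abs, abs_le]
    constructor
    · nlinarith [neg_abs_le a, hV.le]
    · nlinarith [le_abs_self a]
  have hYint : ∀ i, Integrable (Y i) μ := fun i => (hY2 i).integrable one_le_two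
  -- the average is in L²
  have hSmem : MemLp (fun ω => (1 / (s : ℝ)) * ∑ i, Y i ω) 2 μ := by
    have := memLp_finset_sum Finset.univ (fun i (_ : i ∈ Finset.univ) => hY2 i)
    exact this.const_mul _
  -- expectations coincide
  have hmi : ∀ i, ∫ ω, Y i ω ∂μ = m := fun i => (hident i).integral_eq
  have hES : ∫ ω, (1 / (s : ℝ)) * ∑ i, Y i ω ∂μ = m := by
    rw [integral_const_mul, integral_finset_sum _ (fun i _ => hYint i)]
    simp only [hmi, Finset.sum_const, Finset.card_univ, Fintype.card_fin, nsmul_eq_mul]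
    field_simp
  -- expectation of Y₀ lies in [a, a+V]
  have hmb : a ≤ m ∧ m ≤ a + V := by
    constructor
    · have : ∫ _ω, a ∂μ ≤ ∫ ω, Y ⟨0, hs⟩ ω ∂μ := by
        refine integral_mono_ae (integrable_const a) (hYint _) ?_
        filter_upwards [hbdd ⟨0, hs⟩] with ω hω using hω.1
      simpa using this
    · have : ∫ ω, Y ⟨0, hs⟩ ω ∂μ ≤ ∫ _ω, (a + V) ∂μ := by
        refine integral_mono_ae (hYint _) (integrable_const _) ?_
        filter_upwards [hbdd ⟨0, hs⟩] with ω hω using hω.2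
      simpa using this
  -- variance of Y₀ is at most V²
  have hVar1 : variance (Y ⟨0, hs⟩) μ ≤ V ^ 2 := by
    rw [variance_eq_integral (hY2 _).1.aemeasurable]
    have hle : ∫ ω, (Y ⟨0, hs⟩ ω - m) ^ 2 ∂μ ≤ ∫ _ω, V ^ 2 ∂μ := by
      refine integral_mono_ae ?_ (integrable_const _) ?_
      · have := ((hY2 ⟨0, hs⟩).sub (memLp_const m)).integrable_sq
        simpa [Pi.sub_apply] using this
      · filter_upwards [hbdd ⟨0, hs⟩] with ω hω
        have h1 := hω.1; have h2 := hω.2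
        nlinarith [hmb.1, hmb.2]
    simpa using hle
  -- variance of the average
  have hVarS : variance (fun ω => (1 / (s : ℝ)) * ∑ i, Y i ω) μ ≤ V ^ 2 / s := by
    have h1 : variance (fun ω => (1 / (s : ℝ)) * ∑ i, Y i ω) μ
        = (1 / (s : ℝ)) ^ 2 * variance (fun ω => ∑ i, Y i ω) μ :=
      variance_const_mul _ _ _
    have h2 : variance (fun ω => ∑ i, Y i ω) μ = ∑ i, variance (Y i) μ := by
      have := IndepFun.variance_sum (μ := μ) (X := Y) (s := Finset.univ)
        (fun i _ => hY2 i)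
        (fun i _ j _ hij => hindep.indepFun hij)
      rw [← this]
      congr 1
      ext ω
      simp [Finset.sum_apply]
    have h3 : ∑ i, variance (Y i) μ = s * variance (Y ⟨0, hs⟩) μ := by
      simp [fun i => (hident i).variance_eq, Finset.sum_const, Finset.card_univ]
    rw [h1]
    have hss : (s : ℝ) ≠ 0 := ne_of_gt hsR
    calc (1 / (s : ℝ)) ^ 2 * variance (fun ω => ∑ i, Y i ω) μ
        = (1 / (s : ℝ)) ^ 2 * ((s : ℝ) * variance (Y ⟨0, hs⟩) μ) := by rw [h2, h3]
      _ = variance (Y ⟨0, hs⟩) μ / s := by field_simp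
      _ ≤ V ^ 2 / s := by gcongr
    
  -- identify ∫ X² with the variance of the average
  set X : Ω → ℝ := fun ω => (1 / (s : ℝ)) * ∑ i, Y i ω - m with hX
  have hXmem : MemLp X 2 μ := hSmem.sub (memLp_const m)
  have hEX2 : ∫ ω, (X ω) ^ 2 ∂μ = variance (fun ω => (1 / (s : ℝ)) * ∑ i, Y i ω) μ := by
    rw [variance_eq_integral hSmem.1.aemeasurable, hES]
  -- Cauchy–Schwarz: (∫ |X|)² ≤ ∫ X²
  have hCS : (∫ ω, |X ω| ∂μ) ^ 2 ≤ ∫ ω, (X ω) ^ 2 ∂μ := by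
    have habs : MemLp (fun ω => |X ω|) 2 μ := hXmem.abs
    have h := variance_nonneg (fun ω => |X ω|) μ
    rw [variance_eq_sub habs] at h
    have h2 : (∫ ω, |X ω| ∂μ) ^ 2 ≤ ∫ ω, |X ω| ^ 2 ∂μ := by
      have := sub_nonneg.mp h
      simpa using this
    simpa [sq_abs] using h2
  have hI0 : 0 ≤ ∫ ω, |X ω| ∂μ := integral_nonneg fun ω => abs_nonneg _
  have hfinal : (∫ ω, |X ω| ∂μ) ^ 2 ≤ V ^ 2 * (Real.pi / (2 * s)) := by
    calc (∫ ω, |X ω| ∂μ) ^ 2 ≤ ∫ ω, (X ω) ^ 2 ∂μ := hCS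
      _ ≤ V ^ 2 / s := by rw [hEX2]; exact hVarS
      _ ≤ V ^ 2 * (Real.pi / (2 * s)) := by
          rw [div_eq_mul_inv, mul_le_mul_iff_right₀ (by positivity)]
          rw [div_eq_mul_inv, mul_inv, ← mul_assoc]
          have : (1 : ℝ) ≤ Real.pi * 2⁻¹ := by
            nlinarith [Real.pi_gt_three]
          nlinarith [inv_nonneg.mpr hsR.le]
  have : ∫ ω, |X ω| ∂μ ≤ Real.sqrt (V ^ 2 * (Real.pi / (2 * s))) :=
    (Real.le_sqrt hI0 (by positivity)).mpr hfinal
  calc ∫ ω, |(1 / (s : ℝ)) * ∑ i, Y i ω - m| ∂μ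
      = ∫ ω, |X ω| ∂μ := rfl
    _ ≤ Real.sqrt (V ^ 2 * (Real.pi / (2 * s))) := this
    _ = V * Real.sqrt (Real.pi / (2 * s)) := by
        rw [Real.sqrt_mul (by positivity), Real.sqrt_sq hV.le]
end

section
/- Let α ∈ (0,1] and p ≥ 0 with α + p ≤ 1, let γ > 0 satisfy 1 − L·αγ > 0, let T ≥ 1 be an integer and Δ ≥ 0. Let x̃, z̃ ∈ X with x₀ := x̃, z₀ := z̃, and for t = 1,…,T let δ_t ∈ ℝⁿ with ‖δ_t‖ ≤ Δ, and define: y_t := (1 − α − p)x_{t−1} + αz_{t−1} + p·x̃; g_t := ∇φ(y_t) + δ_t; z_t ∈ X satisfying γ(⟨g_t, z_t⟩ + ψ(z_t)) + ½‖z_t − z_{t−1}‖² ≤ γ(⟨g_t, u⟩ + ψ(u)) + ½‖u − z_{t−1}‖² for every u ∈ X; and x_t := (1 − α − p)x_{t−1} + αz_t + p·x̃. Set θ_t := (γ/α)(α + p) for 1 ≤ t ≤ T − 1 and θ_T := γ/α, and define x̃⁺ := (Σ_{t=1}^T θ_t·x_t)/(Σ_{t=1}^T θ_t), 𝓛 :=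 γ/α + (T − 1)·γ(α + p)/α, and 𝓡 := (γ/α)(1 − α) + (T − 1)·γp/α. Suppose x* ∈ X minimizes Φ := φ + ψ over X. Then 𝓛·(Φ(x̃⁺) − Φ(x*)) ≤ 𝓡·(Φ(x̃) − Φ(x*)) + ½‖z̃ − x*‖² − ½‖z_T − x*‖² + γTΔD. -/
open RealInnerProductSpace

section Helpers

variable {E : Type*} [NormedAddCommGroup E] [InnerProductSpace ℝ E]

private lemma line_hasDerivAt_vr [CompleteSpace E] (f : E → ℝ) (f' : E → E)
    (hf : ∀ x, HasGradientAt f (f' x) x) (c v : E) (t₀ : ℝ) :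
    HasDerivAt (fun t : ℝ => f (c + t • v)) ⟪f' (c + t₀ • v), v⟫ t₀ := by
  have hline : HasDerivAt (fun t : ℝ => c + t • v) v t₀ := by
    simpa using ((hasDerivAt_id t₀).smul_const v).const_add c
  have := ((hf (c + t₀ • v)).hasFDerivAt).comp_hasDerivAt t₀ hline
  simpa [InnerProductSpace.toDual_apply_apply, Function.comp_def] using this

private lemma grad_convex_ineq_vr [CompleteSpace E] (f : E → ℝ) (f' : E → E)
    (hconv : ConvexOn ℝ Set.univ f)
    (hf : ∀ x, HasGradientAt f (f' x) x) (a w : E) :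
    f a + ⟪f' a, w - a⟫ ≤ f w := by
  set v := w - a with hv
  have hder : HasDerivAt (fun t : ℝ => f (a + t • v)) ⟪f' a, v⟫ 0 := by
    simpa using line_hasDerivAt_vr f f' hf a v 0
  have hslope : ∀ l : ℝ, 0 < l → l ≤ 1 →
      slope (fun t : ℝ => f (a + t • v)) 0 l ≤ f w - f a := by
    intro l hl hl1
    have hcomb : f (a + l • v) ≤ (1 - l) * f a + l * f w := by
      have h := hconv.2 (Set.mem_univ a) (Set.mem_univ w) (by linarith : (0:ℝ) ≤ 1 - l) hl.le
        (by ring : (1 - l) + l = 1)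
      have h2 : (1 - l) • a + l • w = a + l • v := by rw [hv, smul_sub]; module
      rw [h2] at h; simpa [smul_eq_mul] using h
    rw [slope_def_field]
    have hnum : f (a + l • v) - f (a + (0:ℝ) • v) ≤ l * (f w - f a) := by
      simp only [zero_smul, add_zero]; nlinarith [hcomb]
    rw [sub_zero, div_le_iff₀ hl]
    linarith [hnum]
  have htend : Filter.Tendsto (slope (fun t : ℝ => f (a + t • v)) 0)
      (nhdsWithin 0 (Set.Ioi 0)) (nhds ⟪f' a, v⟫) :=
    (hasDerivAt_iff_tendsto_slope.mp hder).mono_left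
      (nhdsWithin_mono 0 (by intro x hx; exact ne_of_gt hx))
  have : ⟪f' a, v⟫ ≤ f w - f a := by
    refine le_of_tendsto htend ?_
    filter_upwards [Ioc_mem_nhdsGT_of_mem (Set.mem_Ico.mpr ⟨le_refl 0, zero_lt_one⟩)] with l hl
    exact hslope l hl.1 hl.2
  linarith

private lemma descent_lemma_vr [CompleteSpace E] (X : Set E) (hXconv : Convex ℝ X)
    (f : E → ℝ) (f' : E → E)
    (hf : ∀ x, HasGradientAt f (f' x) x) (L : ℝ)
    (hLip : ∀ x ∈ X, ∀ y ∈ X, ‖f' x - f' y‖ ≤ L * ‖x - y‖)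
    (a b : E) (ha : a ∈ X) (hb : b ∈ X) :
    f b ≤ f a + ⟪f' a, b - a⟫ + L / 2 * ‖b - a‖ ^ 2 := by
  set v := b - a with hv
  set F : ℝ → ℝ := fun t => f a + t * ⟪f' a, v⟫ + L * t ^ 2 / 2 * ‖v‖ ^ 2 - f (a + t • v) with hF
  have hmem : ∀ t : ℝ, t ∈ Set.Icc (0:ℝ) 1 → a + t • v ∈ X := by
    intro t ht
    have := hXconv ha hb (by linarith [ht.1, ht.2] : (0:ℝ) ≤ 1 - t) ht.1
      (by ring : (1 - t) + t = 1)
    have h2 : (1 - t) • a + t • b = a + t • v := by rw [hv, smul_sub]; module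
    rwa [h2] at this
  have hFder : ∀ t : ℝ, HasDerivAt F
      (⟪f' a, v⟫ + L * t * ‖v‖ ^ 2 - ⟪f' (a + t • v), v⟫) t := by
    intro t
    have h1 : HasDerivAt (fun s : ℝ => f a + s * ⟪f' a, v⟫ + L * s ^ 2 / 2 * ‖v‖ ^ 2)
        (⟪f' a, v⟫ + L * t * ‖v‖ ^ 2) t := by
      have : HasDerivAt (fun s : ℝ => f a + s * ⟪f' a, v⟫ + L * s ^ 2 / 2 * ‖v‖ ^ 2)
          (0 + 1 * ⟪f' a, v⟫ + L * (2 * t) / 2 * ‖v‖ ^ 2) t := by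
        apply HasDerivAt.add
        · exact (hasDerivAt_const t (f a)).add ((hasDerivAt_id t).mul_const _)
        · exact HasDerivAt.mul_const (HasDerivAt.div_const (HasDerivAt.const_mul L
            (by simpa using hasDerivAt_pow 2 t)) 2) _
      convert this using 1; ring
    exact h1.sub (line_hasDerivAt_vr f f' hf a v t)
  have hF'nonneg : ∀ t ∈ Set.Icc (0:ℝ) 1,
      0 ≤ ⟪f' a, v⟫ + L * t * ‖v‖ ^ 2 - ⟪f' (a + t • v), v⟫ := by
    intro t ht
    have h1 : ⟪f' (a + t • v) - f' a, v⟫ ≤ ‖f' (a + t • v) - f' a‖ * ‖v‖ :=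
      real_inner_le_norm _ _
    have h2 : ‖f' (a + t • v) - f' a‖ ≤ L * (t * ‖v‖) := by
      have := hLip _ (hmem t ht) _ (hmem 0 (Set.mem_Icc.mpr ⟨le_refl 0, zero_le_one⟩))
      simpa [norm_smul, abs_of_nonneg ht.1] using this
    have h3 : ⟪f' (a + t • v) - f' a, v⟫ = ⟪f' (a + t • v), v⟫ - ⟪f' a, v⟫ :=
      inner_sub_left _ _ _
    nlinarith [norm_nonneg v, mul_le_mul_of_nonneg_right h2 (norm_nonneg v)]
  have hmono : MonotoneOn F (Set.Icc (0:ℝ) 1) := by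
    apply monotoneOn_of_deriv_nonneg (convex_Icc 0 1)
    · have hdiff : Differentiable ℝ F := fun t => (hFder t).differentiableAt
      exact hdiff.continuous.continuousOn
    · intro t _
      exact (hFder t).differentiableAt.differentiableWithinAt
    · intro t ht
      rw [(hFder t).deriv]
      exact hF'nonneg t (interior_subset ht)
  have h01 := hmono (Set.mem_Icc.mpr ⟨le_refl 0, zero_le_one⟩)
    (Set.mem_Icc.mpr ⟨zero_le_one, le_refl 1⟩) zero_le_one
  simp only [hF] at h01
  simp only [zero_smul, add_zero, one_smul, zero_mul, mul_zero] at h01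
  have hb' : a + v = b := by rw [hv]; abel
  rw [hb'] at h01
  nlinarith [h01]

private lemma three_point_vr (X : Set E) (hXconv : Convex ℝ X) (ψ : E → ℝ)
    (hψ : ConvexOn ℝ Set.univ ψ) (γ : ℝ) (hγ : 0 < γ) (g z0 zs : E) (hzs : zs ∈ X)
    (hprox : ∀ u ∈ X, γ * (⟪g, zs⟫ + ψ zs) + ‖zs - z0‖ ^ 2 / 2 ≤
      γ * (⟪g, u⟫ + ψ u) + ‖u - z0‖ ^ 2 / 2)
    (u : E) (hu : u ∈ X) :
    γ * (⟪g, zs⟫ + ψ zs) + ‖zs - z0‖ ^ 2 / 2 ≤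
      γ * (⟪g, u⟫ + ψ u) + ‖u - z0‖ ^ 2 / 2 - ‖u - zs‖ ^ 2 / 2 := by
  set d := u - zs with hd
  set e := zs - z0 with he
  set B : ℝ := γ * ⟪g, d⟫ + γ * (ψ u - ψ zs) + ⟪e, d⟫ with hB
  have key : ∀ l : ℝ, 0 < l → l ≤ 1 → 0 ≤ l * B + l ^ 2 * (‖d‖ ^ 2 / 2) := by
    intro l hl hl1
    have hmem : zs + l • d ∈ X := by
      have := hXconv hzs hu (by linarith : (0:ℝ) ≤ 1 - l) hl.le (by ring : (1 - l) + l = 1)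
      have h2 : (1 - l) • zs + l • u = zs + l • d := by rw [hd, smul_sub]; module
      rwa [h2] at this
    have hpx := hprox _ hmem
    have hinner : ⟪g, zs + l • d⟫ = ⟪g, zs⟫ + l * ⟪g, d⟫ := by
      rw [inner_add_right, real_inner_smul_right]
    have hψl : ψ (zs + l • d) ≤ (1 - l) * ψ zs + l * ψ u := by
      have h := hψ.2 (Set.mem_univ zs) (Set.mem_univ u) (by linarith : (0:ℝ) ≤ 1 - l) hl.le
        (by ring : (1 - l) + l = 1)
      have h2 : (1 - l) • zs + l • u = zs + l • d := by rw [hd, smul_sub]; module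
      rw [h2] at h; simpa [smul_eq_mul] using h
    have hnorm : ‖zs + l • d - z0‖ ^ 2 = ‖e‖ ^ 2 + 2 * (l * ⟪e, d⟫) + l ^ 2 * ‖d‖ ^ 2 := by
      have h2 : zs + l • d - z0 = e + l • d := by rw [he]; abel
      rw [h2, norm_add_sq_real, real_inner_smul_right, norm_smul]
      simp [abs_of_nonneg hl.le, mul_pow]
    rw [hinner, hnorm] at hpx
    nlinarith [hpx, mul_le_mul_of_nonneg_left hψl hγ.le]
  have hBnn : 0 ≤ B := by
    by_contra hneg
    push_neg at hneg
    set K : ℝ := ‖d‖ ^ 2 / 2 with hK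
    have hKnn : 0 ≤ K := by positivity
    set l : ℝ := min 1 (-B / (2 * (K + 1))) with hl
    have hlpos : 0 < l := lt_min one_pos (div_pos (by linarith) (by positivity))
    have hl1 : l ≤ 1 := min_le_left _ _
    have hlK : l * (K + 1) ≤ -B / 2 := by
      have : l ≤ -B / (2 * (K + 1)) := min_le_right _ _
      calc l * (K + 1) ≤ (-B / (2 * (K + 1))) * (K + 1) :=
            mul_le_mul_of_nonneg_right this (by linarith)
        _ = -B / 2 := by field_simp; try ring
    have := key l hlpos hl1
    nlinarith [this, mul_le_mul_of_nonneg_left hlK hlpos.le, sq_nonneg l]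
  have hexp : ‖u - z0‖ ^ 2 = ‖d‖ ^ 2 + 2 * ⟪d, e⟫ + ‖e‖ ^ 2 := by
    have h2 : u - z0 = d + e := by rw [hd, he]; abel
    rw [h2, norm_add_sq_real]
  have hcomm : ⟪d, e⟫ = ⟪e, d⟫ := real_inner_comm _ _
  have hig : ⟪g, u⟫ = ⟪g, zs⟫ + ⟪g, d⟫ := by
    rw [hd, inner_sub_right]; ring
  nlinarith [hBnn, hexp, hcomm, hig]

private lemma combo3_mem_vr (X : Set E) (hX : Convex ℝ X) {a b c : E}
    (ha : a ∈ X) (hb : b ∈ X) (hc : c ∈ X) {w1 w2 w3 : ℝ}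
    (h1 : 0 ≤ w1) (h2 : 0 ≤ w2) (h3 : 0 ≤ w3) (hs : w1 + w2 + w3 = 1) :
    w1 • a + w2 • b + w3 • c ∈ X := by
  have := hX.sum_mem (t := (Finset.univ : Finset (Fin 3))) (w := ![w1, w2, w3])
    (z := ![a, b, c]) (fun i _ => by fin_cases i <;> simpa)
    (by simp [Fin.sum_univ_three, hs]) (fun i _ => by fin_cases i <;> simpa)
  simpa [Fin.sum_univ_three] using this

private lemma combo3_convexOn_vr (f : E → ℝ) (hf : ConvexOn ℝ Set.univ f) (a b c : E)
    {w1 w2 w3 : ℝ} (h1 : 0 ≤ w1) (h2 : 0 ≤ w2) (h3 : 0 ≤ w3) (hs : w1 + w2 + w3 = 1) :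
    f (w1 • a + w2 • b + w3 • c) ≤ w1 * f a + w2 * f b + w3 * f c := by
  have := hf.map_sum_le (t := (Finset.univ : Finset (Fin 3))) (w := ![w1, w2, w3])
    (p := ![a, b, c]) (fun i _ => by fin_cases i <;> simpa)
    (by simp [Fin.sum_univ_three, hs]) (fun i _ => Set.mem_univ _)
  simpa [Fin.sum_univ_three, smul_eq_mul] using this

private lemma sum_Icc_one_vr (f : ℕ → ℝ) (n : ℕ) :
    ∑ t ∈ Finset.Icc 1 n, f t = ∑ i ∈ Finset.range n, f (i + 1) := by
  induction n with
  | zero => simp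
  | succ n ih =>
      rw [Finset.sum_Icc_succ_top (Nat.le_add_left 1 n), ih, Finset.sum_range_succ]

private lemma epoch_sum_vr (T : ℕ) (hT : 1 ≤ T) (a r : ℕ → ℝ) (γ α p A c : ℝ)
    (hα : 0 < α) (hγ : 0 < γ) (hc : 0 ≤ c) (ha0 : a 0 = A)
    (step : ∀ i, i < T →
      γ * a (i + 1) ≤ γ * (1 - α - p) * a i + γ * p * A + α * r i - α * r (i + 1) + α * c)
    (θ : ℕ → ℝ) (hθ : ∀ t, 1 ≤ t → t ≤ T - 1 → θ t = γ / α * (α + p)) (hθT : θ T = γ / α) :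
    ∑ t ∈ Finset.Icc 1 T, θ t * a t ≤
      (γ / α * (1 - α) + ((T : ℝ) - 1) * γ * p / α) * A + r 0 - r T + (T : ℝ) * c := by
  obtain ⟨Tm, rfl⟩ : ∃ m, T = m + 1 := ⟨T - 1, (Nat.succ_pred_eq_of_pos hT).symm⟩
  set SS : ℝ := ∑ i ∈ Finset.range Tm, a (i + 1) with hSS
  have hsum : ∑ i ∈ Finset.range (Tm + 1),
      (γ * a (i + 1) - γ * (1 - α - p) * a i - γ * p * A - α * c) ≤
      α * r 0 - α * r (Tm + 1) := by
    have h := Finset.sum_le_sum (f := fun i =>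
        γ * a (i + 1) - γ * (1 - α - p) * a i - γ * p * A - α * c)
      (g := fun i => α * r i - α * r (i + 1))
      (fun i hi => by
        have := step i (Finset.mem_range.mp hi)
        linarith)
    calc _ ≤ ∑ i ∈ Finset.range (Tm + 1), (α * r i - α * r (i + 1)) := h
      _ = α * r 0 - α * r (Tm + 1) := Finset.sum_range_sub' (fun i => α * r i) (Tm + 1)
  have h1 : ∑ i ∈ Finset.range (Tm + 1), γ * a (i + 1) = γ * SS + γ * a (Tm + 1) := by
    rw [Finset.sum_range_succ, Finset.mul_sum]
  have h2 : ∑ i ∈ Finset.range (Tm + 1), γ * (1 - α - p) * a i =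
      γ * (1 - α - p) * A + γ * (1 - α - p) * SS := by
    rw [Finset.sum_range_succ', ← Finset.mul_sum, ha0]; ring
  have h3 : ∑ i ∈ Finset.range (Tm + 1),
      (γ * a (i + 1) - γ * (1 - α - p) * a i - γ * p * A - α * c) =
      (∑ i ∈ Finset.range (Tm + 1), γ * a (i + 1)) -
      (∑ i ∈ Finset.range (Tm + 1), γ * (1 - α - p) * a i) -
      ((Tm : ℝ) + 1) * (γ * p * A) - ((Tm : ℝ) + 1) * (α * c) := by
    rw [Finset.sum_sub_distrib, Finset.sum_sub_distrib, Finset.sum_sub_distrib,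
      Finset.sum_const, Finset.sum_const, Finset.card_range, nsmul_eq_mul, nsmul_eq_mul]
    push_cast; ring
  have key : γ * (α + p) * SS + γ * a (Tm + 1) ≤
      γ * (1 - α - p) * A + ((Tm : ℝ) + 1) * (γ * p * A) + α * r 0 - α * r (Tm + 1)
      + ((Tm : ℝ) + 1) * (α * c) := by
    rw [h3, h1, h2] at hsum
    linarith
  have hIcc : ∑ t ∈ Finset.Icc 1 (Tm + 1), θ t * a t =
      γ / α * (α + p) * SS + γ / α * a (Tm + 1) := by
    rw [Finset.sum_Icc_succ_top (Nat.le_add_left 1 Tm), hθT]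
    have hcong : ∀ t ∈ Finset.Icc 1 Tm, θ t * a t = γ / α * (α + p) * a t := by
      intro t ht
      rw [hθ t (Finset.mem_Icc.mp ht).1 (by simpa using (Finset.mem_Icc.mp ht).2)]
    rw [Finset.sum_congr rfl hcong, ← Finset.mul_sum, sum_Icc_one_vr]
  rw [hIcc]
  have hmul := mul_le_mul_of_nonneg_left key (le_of_lt (by positivity : (0:ℝ) < 1 / α))
  have hαne : α ≠ 0 := ne_of_gt hα
  have hL : γ / α * (α + p) * SS + γ / α * a (Tm + 1) =
      1 / α * (γ * (α + p) * SS + γ * a (Tm + 1)) := by field_simp; try ring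
  have hR : 1 / α * (γ * (1 - α - p) * A + ((Tm : ℝ) + 1) * (γ * p * A) + α * r 0
      - α * r (Tm + 1) + ((Tm : ℝ) + 1) * (α * c)) =
      (γ / α * (1 - α) + (((Tm + 1 : ℕ) : ℝ) - 1) * γ * p / α) * A + r 0 - r (Tm + 1)
      + ((Tm + 1 : ℕ) : ℝ) * c := by
    push_cast; field_simp; try ring
  rw [hL]
  calc 1 / α * (γ * (α + p) * SS + γ * a (Tm + 1)) ≤ _ := hmul
    _ = _ := hR

end Helpers

/-- One epoch of the variance-reduced accelerated scheme with bounded gradient errors: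
with weights `θ_t` and output `x̃⁺ = (Σθ_t x_t)/(Σθ_t)`, setting
`𝓛 = γ/α + (T−1)γ(α+p)/α` and `𝓡 = (γ/α)(1−α) + (T−1)γp/α`, one has
`𝓛(Φ(x̃⁺) − Φ(x*)) ≤ 𝓡(Φ(x̃) − Φ(x*)) + ½‖z̃−x*‖² − ½‖z_T−x*‖² + γTΔD`. -/
theorem vr_epoch_bound {n : ℕ}
    (X : Set (EuclideanSpace ℝ (Fin n))) (hXne : X.Nonempty)
    (hXcompact : IsCompact X) (hXconv : Convex ℝ X)
    (D : ℝ) (hD : 0 < D) (hdiam : ∀ x ∈ X, ∀ y ∈ X, ‖x - y‖ ≤ D)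
    (ψ φ : EuclideanSpace ℝ (Fin n) → ℝ)
    (hψ : ConvexOn ℝ Set.univ ψ) (hφ : ConvexOn ℝ Set.univ φ)
    (φ' : EuclideanSpace ℝ (Fin n) → EuclideanSpace ℝ (Fin n))
    (hφgrad : ∀ x, HasGradientAt φ (φ' x) x)
    (L : ℝ) (hL : 0 < L)
    (hLip : ∀ x ∈ X, ∀ y ∈ X, ‖φ' x - φ' y‖ ≤ L * ‖x - y‖)
    (α p : ℝ) (hα : 0 < α) (hα1 : α ≤ 1) (hp : 0 ≤ p) (hαp : α + p ≤ 1)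
    (γ : ℝ) (hγ : 0 < γ) (hLαγ : 0 < 1 - L * α * γ)
    (T : ℕ) (hT : 1 ≤ T) (Δ : ℝ) (hΔ : 0 ≤ Δ)
    (xt zt : EuclideanSpace ℝ (Fin n)) (hxtX : xt ∈ X) (hztX : zt ∈ X)
    (x z y δ : ℕ → EuclideanSpace ℝ (Fin n))
    (hx0 : x 0 = xt) (hz0 : z 0 = zt)
    (hδ : ∀ t, 1 ≤ t → t ≤ T → ‖δ t‖ ≤ Δ)
    (hy : ∀ t, 1 ≤ t → t ≤ T →
      y t = (1 - α - p) • x (t - 1) + α • z (t - 1) + p • xt)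
    (hzX : ∀ t, 1 ≤ t → t ≤ T → z t ∈ X)
    (hprox : ∀ t, 1 ≤ t → t ≤ T → ∀ u ∈ X,
      γ * (⟪φ' (y t) + δ t, z t⟫ + ψ (z t)) + ‖z t - z (t - 1)‖ ^ 2 / 2 ≤
        γ * (⟪φ' (y t) + δ t, u⟫ + ψ u) + ‖u - z (t - 1)‖ ^ 2 / 2)
    (hxrec : ∀ t, 1 ≤ t → t ≤ T →
      x t = (1 - α - p) • x (t - 1) + α • z t + p • xt)
    (θ : ℕ → ℝ)
    (hθ : ∀ t, 1 ≤ t → t ≤ T - 1 → θ t = γ / α * (α + p))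
    (hθT : θ T = γ / α)
    (xstar : EuclideanSpace ℝ (Fin n)) (hxstarX : xstar ∈ X)
    (hxstaropt : ∀ u ∈ X, φ xstar + ψ xstar ≤ φ u + ψ u) :
    (γ / α + ((T : ℝ) - 1) * γ * (α + p) / α) *
        ((φ ((∑ t ∈ Finset.Icc 1 T, θ t)⁻¹ • ∑ t ∈ Finset.Icc 1 T, θ t • x t) +
          ψ ((∑ t ∈ Finset.Icc 1 T, θ t)⁻¹ • ∑ t ∈ Finset.Icc 1 T, θ t • x t)) -
          (φ xstar + ψ xstar)) ≤
      (γ / α * (1 - α) + ((T : ℝ) - 1) * γ * p / α) *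
        ((φ xt + ψ xt) - (φ xstar + ψ xstar)) +
      ‖zt - xstar‖ ^ 2 / 2 - ‖z T - xstar‖ ^ 2 / 2 + γ * T * Δ * D := by
  have h1αp : 0 ≤ 1 - α - p := by linarith
  -- memberships
  have hzmem : ∀ s, s ≤ T → z s ∈ X := by
    intro s hs
    rcases Nat.eq_zero_or_pos s with h | h
    · subst h; rw [hz0]; exact hztX
    · exact hzX s h hs
  have hxmem : ∀ s, s ≤ T → x s ∈ X := by
    intro s
    induction s with
    | zero => intro _; rw [hx0]; exact hxtX
    | succ k ih =>
        intro hk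
        rw [hxrec (k + 1) (Nat.succ_le_succ (Nat.zero_le k)) hk]
        simp only [Nat.add_sub_cancel]
        exact combo3_mem_vr X hXconv (ih (le_trans (Nat.le_succ k) hk))
          (hzmem (k + 1) hk) hxtX h1αp hα.le hp (by ring)
  have hymem : ∀ t, 1 ≤ t → t ≤ T → y t ∈ X := by
    intro t h1 h2
    rw [hy t h1 h2]
    exact combo3_mem_vr X hXconv (hxmem (t - 1) (le_trans (Nat.sub_le t 1) h2))
      (hzmem (t - 1) (le_trans (Nat.sub_le t 1) h2)) hxtX h1αp hα.le hp (by ring)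
  -- the per-step inequality
  have step : ∀ i, i < T →
      γ * ((φ (x (i + 1)) + ψ (x (i + 1))) - (φ xstar + ψ xstar)) ≤
        γ * (1 - α - p) * ((φ (x i) + ψ (x i)) - (φ xstar + ψ xstar)) +
        γ * p * ((φ xt + ψ xt) - (φ xstar + ψ xstar)) +
        α * (‖z i - xstar‖ ^ 2 / 2) - α * (‖z (i + 1) - xstar‖ ^ 2 / 2) +
        α * (γ * Δ * D) := by
    intro i hiT
    have h1t : 1 ≤ i + 1 := Nat.succ_le_succ (Nat.zero_le i)
    have h2t : i + 1 ≤ T := hiT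
    have hi1 : i + 1 - 1 = i := rfl
    have hyt := hy (i + 1) h1t h2t; rw [hi1] at hyt
    have hxt' := hxrec (i + 1) h1t h2t; rw [hi1] at hxt'
    have hprox' := hprox (i + 1) h1t h2t; rw [hi1] at hprox'
    have hxm : x (i + 1) ∈ X := hxmem (i + 1) h2t
    have hxm0 : x i ∈ X := hxmem i (le_trans (Nat.le_succ i) h2t)
    have hym : y (i + 1) ∈ X := hymem (i + 1) h1t h2t
    have hzm : z (i + 1) ∈ X := hzmem (i + 1) h2t
    have hzm0 : z i ∈ X := hzmem i (le_trans (Nat.le_succ i) h2t)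
    -- descent lemma
    have hdesc := descent_lemma_vr X hXconv φ φ' hφgrad L hLip (y (i + 1)) (x (i + 1)) hym hxm
    have hdvec : x (i + 1) - y (i + 1) = α • (z (i + 1) - z i) := by
      rw [hxt', hyt]; module
    have e1 : ⟪φ' (y (i + 1)), x (i + 1) - y (i + 1)⟫ =
        α * ⟪φ' (y (i + 1)), z (i + 1) - z i⟫ := by
      rw [hdvec, real_inner_smul_right]
    have e2 : ‖x (i + 1) - y (i + 1)‖ ^ 2 = α ^ 2 * ‖z (i + 1) - z i‖ ^ 2 := by
      rw [hdvec, norm_smul]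
      simp [abs_of_nonneg hα.le]
      ring
    rw [e1, e2] at hdesc
    have hvec : α • (z (i + 1) - z i) =
        α • (z (i + 1) - xstar) + α • (xstar - y (i + 1)) +
        (1 - α - p) • (x i - y (i + 1)) + p • (xt - y (i + 1)) := by
      rw [hyt]; module
    have e3 : α * ⟪φ' (y (i + 1)), z (i + 1) - z i⟫ =
        α * ⟪φ' (y (i + 1)), z (i + 1) - xstar⟫ + α * ⟪φ' (y (i + 1)), xstar - y (i + 1)⟫ +
        (1 - α - p) * ⟪φ' (y (i + 1)), x i - y (i + 1)⟫ +
        p * ⟪φ' (y (i + 1)), xt - y (i + 1)⟫ := by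
      calc α * ⟪φ' (y (i + 1)), z (i + 1) - z i⟫
          = ⟪φ' (y (i + 1)), α • (z (i + 1) - z i)⟫ := (real_inner_smul_right _ _ _).symm
        _ = _ := by
            rw [hvec, inner_add_right, inner_add_right, inner_add_right,
              real_inner_smul_right, real_inner_smul_right, real_inner_smul_right,
              real_inner_smul_right]
    rw [e3] at hdesc
    have eP1 : ⟪φ' (y (i + 1)), z (i + 1) - xstar⟫ =
        ⟪φ' (y (i + 1)), z (i + 1)⟫ - ⟪φ' (y (i + 1)), xstar⟫ := inner_sub_right _ _ _
    rw [eP1] at hdesc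
    -- convexity inequalities
    have hC2 := grad_convex_ineq_vr φ φ' hφ hφgrad (y (i + 1)) xstar
    have hC3 := grad_convex_ineq_vr φ φ' hφ hφgrad (y (i + 1)) (x i)
    have hC4 := grad_convex_ineq_vr φ φ' hφ hφgrad (y (i + 1)) xt
    -- three-point inequality
    have h3p := three_point_vr X hXconv ψ hψ γ hγ (φ' (y (i + 1)) + δ (i + 1)) (z i)
      (z (i + 1)) hzm hprox' xstar hxstarX
    rw [inner_add_left, inner_add_left, norm_sub_rev xstar (z i),
      norm_sub_rev xstar (z (i + 1))] at h3p
    -- error bound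
    have hdelta : ⟪δ (i + 1), xstar⟫ - ⟪δ (i + 1), z (i + 1)⟫ ≤ Δ * D := by
      have h0 : ⟪δ (i + 1), xstar⟫ - ⟪δ (i + 1), z (i + 1)⟫ =
          ⟪δ (i + 1), xstar - z (i + 1)⟫ := (inner_sub_right _ _ _).symm
      rw [h0]
      calc ⟪δ (i + 1), xstar - z (i + 1)⟫ ≤ ‖δ (i + 1)‖ * ‖xstar - z (i + 1)‖ :=
            real_inner_le_norm _ _
        _ ≤ Δ * D := mul_le_mul (hδ (i + 1) h1t h2t) (hdiam xstar hxstarX (z (i + 1)) hzm)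
            (norm_nonneg _) hΔ
    -- convexity of ψ
    have hψ7 : ψ (x (i + 1)) ≤ (1 - α - p) * ψ (x i) + α * ψ (z (i + 1)) + p * ψ xt := by
      rw [hxt']
      exact combo3_convexOn_vr ψ hψ _ _ _ h1αp hα.le hp (by ring)
    -- scaled inequalities
    have T1 := mul_le_mul_of_nonneg_left hdesc hγ.le
    have T2 := mul_le_mul_of_nonneg_left h3p hα.le
    have hC2' : ⟪φ' (y (i + 1)), xstar - y (i + 1)⟫ ≤ φ xstar - φ (y (i + 1)) := by
      linarith [hC2]
    have hC3' : ⟪φ' (y (i + 1)), x i - y (i + 1)⟫ ≤ φ (x i) - φ (y (i + 1)) := by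
      linarith [hC3]
    have hC4' : ⟪φ' (y (i + 1)), xt - y (i + 1)⟫ ≤ φ xt - φ (y (i + 1)) := by
      linarith [hC4]
    have T3 := mul_le_mul_of_nonneg_left hC2' (mul_nonneg hγ.le hα.le)
    have T4 := mul_le_mul_of_nonneg_left hC3' (mul_nonneg hγ.le h1αp)
    have T5 := mul_le_mul_of_nonneg_left hC4' (mul_nonneg hγ.le hp)
    have T6 := mul_le_mul_of_nonneg_left hdelta (mul_nonneg hγ.le hα.le)
    have T7 : 0 ≤ (α / 2 * (1 - L * α * γ)) * ‖z (i + 1) - z i‖ ^ 2 :=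
      mul_nonneg (mul_nonneg (by linarith) hLαγ.le) (sq_nonneg _)
    have T8 := mul_le_mul_of_nonneg_left hψ7 hγ.le
    linarith [T1, T2, T3, T4, T5, T6, T7, T8]
  -- sum up
  have hsum := epoch_sum_vr T hT
    (fun s => (φ (x s) + ψ (x s)) - (φ xstar + ψ xstar))
    (fun s => ‖z s - xstar‖ ^ 2 / 2)
    γ α p ((φ xt + ψ xt) - (φ xstar + ψ xstar)) (γ * Δ * D)
    hα hγ (by positivity) (by simp only [hx0]) step θ hθ hθT
  -- Jensen
  have hθnn : ∀ t ∈ Finset.Icc 1 T, 0 ≤ θ t := by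
    intro t ht
    obtain ⟨ht1, ht2⟩ := Finset.mem_Icc.mp ht
    rcases eq_or_lt_of_le ht2 with h | h
    · rw [h, hθT]; positivity
    · rw [hθ t ht1 (Nat.le_sub_one_of_lt h)]
      exact mul_nonneg (div_nonneg hγ.le hα.le) (by linarith)
  have hT1 : (1 : ℝ) ≤ (T : ℝ) := by exact_mod_cast hT
  have hθsum : ∑ t ∈ Finset.Icc 1 T, θ t =
      γ / α + ((T : ℝ) - 1) * γ * (α + p) / α := by
    obtain ⟨Tm, rfl⟩ : ∃ m, T = m + 1 := ⟨T - 1, (Nat.succ_pred_eq_of_pos hT).symm⟩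
    rw [Finset.sum_Icc_succ_top (Nat.le_add_left 1 Tm), hθT]
    have hcong : ∀ t ∈ Finset.Icc 1 Tm, θ t = γ / α * (α + p) := by
      intro t ht
      exact hθ t (Finset.mem_Icc.mp ht).1 (by simpa using (Finset.mem_Icc.mp ht).2)
    rw [Finset.sum_congr rfl hcong, Finset.sum_const, Nat.card_Icc]
    simp only [Nat.add_sub_cancel, nsmul_eq_mul]
    push_cast; ring
  have hθpos : 0 < ∑ t ∈ Finset.Icc 1 T, θ t := by
    rw [hθsum]
    have h2 : 0 ≤ ((T : ℝ) - 1) * γ * (α + p) / α :=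
      div_nonneg (mul_nonneg (mul_nonneg (by linarith) hγ.le) (by linarith)) hα.le
    have h3 : 0 < γ / α := div_pos hγ hα
    linarith
  have hjen := (hφ.add hψ).map_centerMass_le (t := Finset.Icc 1 T) (w := θ) (p := x)
    hθnn hθpos (fun i _ => Set.mem_univ _)
  simp only [Finset.centerMass, Function.comp, Pi.add_apply, smul_eq_mul] at hjen
  -- combine
  set Q := (∑ t ∈ Finset.Icc 1 T, θ t)⁻¹ • ∑ t ∈ Finset.Icc 1 T, θ t • x t with hQ
  set Lsum := ∑ t ∈ Finset.Icc 1 T, θ t with hLsum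
  have hmul := mul_le_mul_of_nonneg_left hjen hθpos.le
  rw [← mul_assoc, mul_inv_cancel₀ (ne_of_gt hθpos), one_mul] at hmul
  have hsplit : ∑ t ∈ Finset.Icc 1 T, θ t * (φ (x t) + ψ (x t)) =
      (∑ t ∈ Finset.Icc 1 T, θ t * ((φ (x t) + ψ (x t)) - (φ xstar + ψ xstar))) +
      Lsum * (φ xstar + ψ xstar) := by
    rw [hLsum, Finset.sum_mul]
    rw [← Finset.sum_add_distrib]
    apply Finset.sum_congr rfl
    intro t _
    ring
  rw [hsplit] at hmul
  rw [← hθsum]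
  have hzT : ‖zt - xstar‖ ^ 2 / 2 = ‖z 0 - xstar‖ ^ 2 / 2 := by rw [hz0]
  rw [hzT]
  have final : Lsum * (φ Q + ψ Q) - Lsum * (φ xstar + ψ xstar) ≤
      (γ / α * (1 - α) + ((T : ℝ) - 1) * γ * p / α) *
        ((φ xt + ψ xt) - (φ xstar + ψ xstar)) +
      ‖z 0 - xstar‖ ^ 2 / 2 - ‖z T - xstar‖ ^ 2 / 2 + (T : ℝ) * (γ * Δ * D) := by
    calc Lsum * (φ Q + ψ Q) - Lsum * (φ xstar + ψ xstar)
        ≤ (∑ t ∈ Finset.Icc 1 T, θ t * ((φ (x t) + ψ (x t)) - (φ xstar + ψ xstar))) := by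
          linarith [hmul]
      _ ≤ _ := hsum
  calc Lsum * ((φ Q + ψ Q) - (φ xstar + ψ xstar))
      = Lsum * (φ Q + ψ Q) - Lsum * (φ xstar + ψ xstar) := by ring
    _ ≤ _ := final
    _ = _ := by ring
end
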